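/- arXiv:1308.1261 — 2 statements merged into one kernel-verified Lean document; each statement's English description precedes it below -/
import Mathlib

section
/- Let m be a non-negative integer and let τ, z₁, z₂, t ∈ ℂ with Im τ > 0, z₁ ∉ ℤ + ℤτ and z₂ ∉ ℤ + ℤτ, and set q = e^{2πiτ}. Then: (a) Φ^{[m]}(τ, z₁+a, z₂+b, t) = Φ^{[m]}(τ, z₁, z₂, t) for all integers a, b; (b) Φ^{[m]}(τ, −z₁, −z₂, t) = −Φ^{[m]}(τ, z₁, z₂, t); (c) Φ^{[m]}(τ, z₂, z₁, t) = Φ^{[m]}(τ, z₁, z₂, t); (d) Φ^{[m]}(τ, z₁+τ, z₂+τ, t) = q^{−(m+1)} e^{−2πi(m+1)(z₁+z₂)} Φ^{[m]}(τ, z₁, z₂, t). -/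
/-!
Write `Φ^[m] = e^{2πi(m+1)t} ∑_j (T(z₁,z₂)_j - T(-z₂,-z₁)_j)` with
`T(z₁,z₂)_j = ϑ_j((m+1)(z₁+z₂)) / (1 - e^{2πiz₁} q^j)`, where `ϑ_j` is the `j`-th term of Jacobi's
theta series of modulus `2(m+1)τ`. Integer shifts of `z₁, z₂` leave every `T_j` unchanged, and
shifting both by `τ` multiplies `T(z₁,z₂)_j` and `T(-z₂,-z₁)_j` by the same factor while moving the
index by `+1` resp. `-1`, which a sum over `ℤ` absorbs. For the symmetry, reindex `j ↦ -j` and use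
`1/(1 - x⁻¹) + 1/(1 - x) = 1`: the series for `(z₁,z₂)` becomes the series for `(z₂,z₁)` plus
`∑_j (ϑ_j(w) - ϑ_j(-w))`, which vanishes because the theta function is even. Oddness is then read
off the definition. All series converge because `|q| < 1` keeps the denominators away from `0` for
large `|j|`.
-/

open Complex

namespace KW

local notation "π" => (Real.pi : ℂ)

/-- The lattice `ℤ + ℤτ`. -/
def InLattice (τ z : ℂ) : Prop := ∃ a b : ℤ, z = (a : ℂ) + (b : ℂ) * τ

/-- The mock theta function `Φ^[m]` of Kac–Wakimoto. -/
noncomputable def Phi (m : ℕ) (τ z₁ z₂ t : ℂ) : ℂ :=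
  exp (2 * π * I * ((m : ℂ) + 1) * t) *
    ∑' j : ℤ,
      (exp (2 * π * I * (j : ℂ) * ((m : ℂ) + 1) * (z₁ + z₂)) *
            exp (2 * π * I * τ * (((m : ℂ) + 1) * (j : ℂ) ^ 2)) /
          (1 - exp (2 * π * I * z₁) * exp (2 * π * I * τ * (j : ℂ))) -
        exp (-(2 * π * I * (j : ℂ) * ((m : ℂ) + 1) * (z₁ + z₂))) *
            exp (2 * π * I * τ * (((m : ℂ) + 1) * (j : ℂ) ^ 2)) /
          (1 - exp (-(2 * π * I * z₂)) * exp (2 * π * I * τ * (j : ℂ))))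

noncomputable def denom (τ z : ℂ) (j : ℤ) : ℂ :=
  1 - exp (2 * π * I * z) * exp (2 * π * I * τ * j)

noncomputable def term (m : ℕ) (τ z₁ z₂ : ℂ) (j : ℤ) : ℂ :=
  jacobiTheta₂_term j ((m + 1) * (z₁ + z₂)) (2 * (m + 1) * τ) / denom τ z₁ j

noncomputable def phiSummand (m : ℕ) (τ z₁ z₂ : ℂ) (j : ℤ) : ℂ :=
  term m τ z₁ z₂ j - term m τ (-z₂) (-z₁) j

lemma Phi_eq_mul_tsum (m : ℕ) (τ z₁ z₂ t : ℂ) :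
    Phi m τ z₁ z₂ t = exp (2 * π * I * (m + 1) * t) * ∑' j, phiSummand m τ z₁ z₂ j := by
  rw [Phi]
  congr 1
  refine tsum_congr fun j => ?_
  simp only [phiSummand, term, denom, jacobiTheta₂_term, ← exp_add]
  congr 2
  · congr 1; ring
  · congr 1; ring
  · congr 3; ring

lemma denom_add_intCast (τ z : ℂ) (n j : ℤ) : denom τ (z + n) j = denom τ z j := by
  rw [denom, denom, mul_add, mul_comm _ (n : ℂ), exp_periodic.int_mul n]

lemma term_add_intCast (m : ℕ) (τ u v : ℂ) (a b j : ℤ) :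
    term m τ (u + a) (v + b) j = term m τ u v j := by
  have hθ : jacobiTheta₂_term j ((m + 1) * (u + a + (v + b))) (2 * (m + 1) * τ) =
      jacobiTheta₂_term j ((m + 1) * (u + v)) (2 * (m + 1) * τ) := by
    refine (congrArg exp ?_).trans (exp_periodic.int_mul (j * (m + 1) * (a + b)) _)
    push_cast
    ring
  rw [term, term, hθ, denom_add_intCast]

lemma phiSummand_add_intCast (m : ℕ) (τ z₁ z₂ : ℂ) (a b : ℤ) :
    phiSummand m τ (z₁ + a) (z₂ + b) = phiSummand m τ z₁ z₂ := by
  funext j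
  rw [phiSummand, phiSummand, term_add_intCast,
    show -(z₂ + b) = -z₂ + ((-b : ℤ) : ℂ) by push_cast; ring,
    show -(z₁ + a) = -z₁ + ((-a : ℤ) : ℂ) by push_cast; ring, term_add_intCast]

lemma phiSummand_neg (m : ℕ) (τ z₁ z₂ : ℂ) :
    phiSummand m τ (-z₁) (-z₂) = -phiSummand m τ z₂ z₁ := by
  funext j
  rw [Pi.neg_apply, phiSummand, phiSummand, neg_neg, neg_neg, neg_sub]

lemma InLattice.neg {τ z : ℂ} (h : InLattice τ z) : InLattice τ (-z) := by
  obtain ⟨a, b, rfl⟩ := h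
  exact ⟨-a, -b, by push_cast; ring⟩

lemma inLattice_neg_iff {τ z : ℂ} : InLattice τ (-z) ↔ InLattice τ z :=
  ⟨fun h => by simpa using h.neg, InLattice.neg⟩

lemma denom_ne_zero {τ z : ℂ} (h : ¬ InLattice τ z) (j : ℤ) : denom τ z j ≠ 0 := by
  intro h0
  rw [denom, sub_eq_zero, ← exp_add, eq_comm, exp_eq_one_iff] at h0
  obtain ⟨n, hn⟩ := h0
  refine h ⟨n, -j, mul_left_cancel₀ two_pi_I_ne_zero ?_⟩
  push_cast
  linear_combination hn

open Filter in
lemma eventually_half_le_norm_denom {τ : ℂ} (hτ : 0 < τ.im) (z : ℂ) :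
    ∀ᶠ j in cofinite, 1 / 2 ≤ ‖denom τ z j‖ := by
  set x : ℤ → ℂ := fun j => exp (2 * π * I * z) * exp (2 * π * I * τ * j)
  set g : ℤ → ℝ := fun j => -(2 * Real.pi * τ.im) * j - 2 * Real.pi * z.im
  have hx : ∀ j, ‖x j‖ = Real.exp (g j) := fun j => by
    simp only [x, g, ← exp_add, norm_exp, add_re, mul_re, mul_im, ofReal_re, ofReal_im, I_re, I_im,
      intCast_re, intCast_im, re_ofNat, im_ofNat]
    ring_nf
  have hslope : -(2 * Real.pi * τ.im) < 0 := neg_lt_zero.2 (by positivity)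
  have hg_top : Tendsto g atTop atBot :=
    tendsto_atBot_add_const_right _ _ (tendsto_intCast_atTop_atTop.const_mul_atTop_of_neg hslope)
  have hg_bot : Tendsto g atBot atTop :=
    tendsto_atTop_add_const_right _ _
      ((tendsto_intCast_atBot_iff.2 tendsto_id).const_mul_atBot_of_neg hslope)
  rw [Int.cofinite_eq, eventually_sup]
  constructor
  · filter_upwards [(Real.tendsto_exp_atTop.comp hg_bot).eventually_ge_atTop (3 / 2)] with j hj
    change 1 / 2 ≤ ‖1 - x j‖
    have := norm_sub_norm_le (x j) 1
    rw [norm_one, hx, norm_sub_rev] at this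
    exact le_trans (by simp only [Function.comp_apply] at hj; linarith) this
  · filter_upwards [(Real.tendsto_exp_atBot.comp hg_top).eventually_le_const
      (by norm_num : (0 : ℝ) < 1 / 2)] with j hj
    change 1 / 2 ≤ ‖1 - x j‖
    have := norm_sub_norm_le 1 (x j)
    rw [norm_one, hx] at this
    exact le_trans (by simp only [Function.comp_apply] at hj; linarith) this

lemma two_mul_succ_mul_im_pos (m : ℕ) {τ : ℂ} (hτ : 0 < τ.im) : 0 < (2 * (m + 1) * τ).im := by
  simpa using mul_pos (by positivity : (0 : ℝ) < 2 * (m + 1)) hτ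

lemma summable_term (m : ℕ) {τ : ℂ} (hτ : 0 < τ.im) (z₁ z₂ : ℂ) :
    Summable (term m τ z₁ z₂) := by
  have hθ : Summable (jacobiTheta₂_term · ((m + 1) * (z₁ + z₂)) (2 * (m + 1) * τ)) := by
    rw [summable_jacobiTheta₂_term_iff]
    exact two_mul_succ_mul_im_pos m hτ
  refine Summable.of_norm_bounded_eventually (hθ.norm.mul_left 2) ?_
  filter_upwards [eventually_half_le_norm_denom hτ z₁] with j hj
  rw [term, norm_div, div_le_iff₀ (by linarith)]
  nlinarith [norm_nonneg (jacobiTheta₂_term j ((m + 1) * (z₁ + z₂)) (2 * (m + 1) * τ))]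

lemma summable_phiSummand (m : ℕ) {τ : ℂ} (hτ : 0 < τ.im) (z₁ z₂ : ℂ) :
    Summable (phiSummand m τ z₁ z₂) :=
  (summable_term m hτ z₁ z₂).sub (summable_term m hτ (-z₂) (-z₁))

lemma div_one_sub_inv_add_div_one_sub {K : Type*} [Field K] (a : K) {x : K} (h0 : x ≠ 0)
    (h1 : x ≠ 1) : a / (1 - x⁻¹) + a / (1 - x) = a := by
  have : 1 - x ≠ 0 := sub_ne_zero.2 h1.symm
  have : x - 1 ≠ 0 := sub_ne_zero.2 h1
  field_simp
  ring

lemma term_neg_add_term_neg (m : ℕ) {τ u : ℂ} (hu : ¬ InLattice τ u) (v : ℂ) (j : ℤ) :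
    term m τ u v (-j) + term m τ (-u) (-v) j =
      jacobiTheta₂_term (-j) ((m + 1) * (u + v)) (2 * (m + 1) * τ) := by
  have hθ : jacobiTheta₂_term j ((m + 1) * (-u + -v)) (2 * (m + 1) * τ) =
      jacobiTheta₂_term (-j) ((m + 1) * (u + v)) (2 * (m + 1) * τ) := by
    simp only [jacobiTheta₂_term]; congr 1; push_cast; ring
  have hinv : exp (2 * π * I * u) * exp (2 * π * I * τ * ((-j : ℤ) : ℂ)) =
      (exp (2 * π * I * (-u)) * exp (2 * π * I * τ * j))⁻¹ := by
    rw [← exp_add, ← exp_add, ← exp_neg]; congr 1; push_cast; ring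
  have hne : exp (2 * π * I * (-u)) * exp (2 * π * I * τ * j) ≠ 1 := fun h =>
    denom_ne_zero (mt inLattice_neg_iff.1 hu) j (by rw [denom, h, sub_self])
  rw [term, term, hθ, denom, denom, hinv]
  exact div_one_sub_inv_add_div_one_sub _ (mul_ne_zero (exp_ne_zero _) (exp_ne_zero _)) hne

lemma hasSum_jacobiTheta₂_term_neg (z : ℂ) {τ : ℂ} (hτ : 0 < τ.im) :
    HasSum (fun j : ℤ => jacobiTheta₂_term (-j) z τ) (jacobiTheta₂ z τ) :=
  (Equiv.neg ℤ).hasSum_iff.2 (hasSum_jacobiTheta₂_term z hτ)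

lemma tsum_phiSummand_swap (m : ℕ) {τ z₁ z₂ : ℂ} (hτ : 0 < τ.im) (h₁ : ¬ InLattice τ z₁)
    (h₂ : ¬ InLattice τ z₂) :
    ∑' j, phiSummand m τ z₂ z₁ j = ∑' j, phiSummand m τ z₁ z₂ j := by
  have hτ' := two_mul_succ_mul_im_pos m hτ
  have hθ := (hasSum_jacobiTheta₂_term_neg ((m + 1) * (z₁ + z₂)) hτ').sub
    (hasSum_jacobiTheta₂_term_neg ((m + 1) * (-z₂ + -z₁)) hτ')
  rw [show (m + 1) * (-z₂ + -z₁) = -((m + 1) * (z₁ + z₂)) by ring, jacobiTheta₂_neg_left,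
    sub_self] at hθ
  have hsum := (summable_phiSummand m hτ z₂ z₁).hasSum.add hθ
  rw [add_zero] at hsum
  refine ((Equiv.neg ℤ).hasSum_iff.1 (hsum.congr_fun fun j => ?_)).tsum_eq.symm
  have e₁ := term_neg_add_term_neg m h₁ z₂ j
  have e₂ := term_neg_add_term_neg m (mt inLattice_neg_iff.1 h₂) (-z₁) j
  rw [neg_neg, neg_neg, show (m + 1) * (-z₂ + -z₁) = -((m + 1) * (z₁ + z₂)) by ring] at e₂
  simp only [Function.comp_apply, Equiv.neg_apply, phiSummand]
  linear_combination e₁ - e₂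

lemma term_add_add (m : ℕ) (τ u v : ℂ) (j : ℤ) :
    term m τ (u + τ) (v + τ) j =
      exp (2 * π * I * τ * (-((m : ℂ) + 1))) * exp (-(2 * π * I * ((m : ℂ) + 1) * (u + v))) *
        term m τ u v (j + 1) := by
  simp only [term, denom, jacobiTheta₂_term, ← mul_div_assoc, ← exp_add]
  congr 1
  · congr 1; push_cast; ring
  · congr 2; push_cast; ring

lemma term_sub_sub (m : ℕ) (τ u v : ℂ) (j : ℤ) :
    term m τ (u - τ) (v - τ) j =
      exp (2 * π * I * τ * (-((m : ℂ) + 1))) * exp (2 * π * I * ((m : ℂ) + 1) * (u + v)) *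
        term m τ u v (j - 1) := by
  simp only [term, denom, jacobiTheta₂_term, ← mul_div_assoc, ← exp_add]
  congr 1
  · congr 1; push_cast; ring
  · congr 2; push_cast; ring

lemma tsum_phiSummand_add_add (m : ℕ) {τ : ℂ} (hτ : 0 < τ.im) (z₁ z₂ : ℂ) :
    ∑' j, phiSummand m τ (z₁ + τ) (z₂ + τ) j =
      exp (2 * π * I * τ * (-((m : ℂ) + 1))) * exp (-(2 * π * I * ((m : ℂ) + 1) * (z₁ + z₂))) *
        ∑' j, phiSummand m τ z₁ z₂ j := by
  set c := exp (2 * π * I * τ * (-((m : ℂ) + 1))) * exp (-(2 * π * I * ((m : ℂ) + 1) * (z₁ + z₂)))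
    with hc
  have hs₁ := summable_term m hτ z₁ z₂
  have hs₂ := summable_term m hτ (-z₂) (-z₁)
  have hup : HasSum (fun j => term m τ z₁ z₂ (j + 1)) (∑' j, term m τ z₁ z₂ j) := by
    simpa only [Function.comp_def, Equiv.coe_addRight] using
      (Equiv.addRight (1 : ℤ)).hasSum_iff.2 hs₁.hasSum
  have hdown : HasSum (fun j => term m τ (-z₂) (-z₁) (j - 1)) (∑' j, term m τ (-z₂) (-z₁) j) := by
    simpa only [Function.comp_def, Equiv.subRight_apply] using
      (Equiv.subRight (1 : ℤ)).hasSum_iff.2 hs₂.hasSum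
  calc ∑' j, phiSummand m τ (z₁ + τ) (z₂ + τ) j
      = ∑' j, c * (term m τ z₁ z₂ (j + 1) - term m τ (-z₂) (-z₁) (j - 1)) := by
        refine tsum_congr fun j => ?_
        rw [hc, phiSummand, term_add_add, show -(z₂ + τ) = -z₂ - τ by ring,
          show -(z₁ + τ) = -z₁ - τ by ring, term_sub_sub,
          show 2 * π * I * ((m : ℂ) + 1) * (-z₂ + -z₁) = -(2 * π * I * ((m : ℂ) + 1) * (z₁ + z₂))
            by ring]
        ring
    _ = c * (∑' j, term m τ z₁ z₂ j - ∑' j, term m τ (-z₂) (-z₁) j) :=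
        ((hup.sub hdown).mul_left c).tsum_eq
    _ = c * ∑' j, phiSummand m τ z₁ z₂ j := by rw [← hs₁.tsum_sub hs₂]; rfl

/-- Lemma 5.1(a)–(d) of Kac–Wakimoto: elementary transformation properties of `Φ^[m]`. -/
theorem statement0 (m : ℕ) (τ z₁ z₂ t : ℂ) (hτ : 0 < τ.im)
    (h₁ : ¬ InLattice τ z₁) (h₂ : ¬ InLattice τ z₂) :
    (∀ a b : ℤ, Phi m τ (z₁ + (a : ℂ)) (z₂ + (b : ℂ)) t = Phi m τ z₁ z₂ t) ∧
    (Phi m τ (-z₁) (-z₂) t = -Phi m τ z₁ z₂ t) ∧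
    (Phi m τ z₂ z₁ t = Phi m τ z₁ z₂ t) ∧
    (Phi m τ (z₁ + τ) (z₂ + τ) t =
      exp (2 * π * I * τ * (-((m : ℂ) + 1))) *
        exp (-(2 * π * I * ((m : ℂ) + 1) * (z₁ + z₂))) * Phi m τ z₁ z₂ t) := by
  have swap := tsum_phiSummand_swap m hτ h₁ h₂
  refine ⟨fun a b => ?_, ?_, ?_, ?_⟩
  · rw [Phi_eq_mul_tsum, Phi_eq_mul_tsum, phiSummand_add_intCast]
  · rw [Phi_eq_mul_tsum, Phi_eq_mul_tsum, phiSummand_neg, ← swap]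
    simp only [Pi.neg_apply, tsum_neg, mul_neg]
  · rw [Phi_eq_mul_tsum, Phi_eq_mul_tsum, swap]
  · rw [Phi_eq_mul_tsum, Phi_eq_mul_tsum, tsum_phiSummand_add_add m hτ]
    ring

end KW
end

section
/- Let m be a positive integer. Then, for Im τ > 0 and z₁, z₂ ∉ ℤ + ℤτ, Φ^{A₁|₁[m]}(τ, z₁, z₂, t) = (D₀ Φ^{[m−1]})(τ, z₁, z₂, t), i.e. the series defining Φ^{A₁|₁[m]} equals (1/2πi)(∂/∂z₁ − ∂/∂z₂) applied to Φ^{[m−1]}. -/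
open Complex MeasureTheory

namespace KW

local notation "π" => (Real.pi : ℂ)

/-- The numerator `Φ^{A₁|₁[m]}` of the `A(1|1)^` normalized supercharacter. -/
noncomputable def PhiA (m : ℕ) (τ z₁ z₂ t : ℂ) : ℂ :=
  exp (2 * π * I * (m : ℂ) * t) *
    ∑' j : ℤ,
      (exp (2 * π * I * (j : ℂ) * (m : ℂ) * (z₁ + z₂)) * exp (2 * π * I * z₁) *
            exp (2 * π * I * τ * ((m : ℂ) * (j : ℂ) ^ 2 + (j : ℂ))) /
          (1 - exp (2 * π * I * z₁) * exp (2 * π * I * τ * (j : ℂ))) ^ 2 -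
        exp (-(2 * π * I * (j : ℂ) * (m : ℂ) * (z₁ + z₂))) * exp (-(2 * π * I * z₂)) *
            exp (2 * π * I * τ * ((m : ℂ) * (j : ℂ) ^ 2 + (j : ℂ))) /
          (1 - exp (-(2 * π * I * z₂)) * exp (2 * π * I * τ * (j : ℂ))) ^ 2)

/-!
The series for `Φ^[m-1]` may be differentiated term by term in `z₁`: near a point off the
lattice the denominators `1 - e(z₁) qʲ` are bounded away from `0` uniformly in `j` (they tend to
`1` or to `∞` as `j → ±∞`), and the numerators are Jacobi theta summands, hence dominated by a
summable Gaussian. The `z₂`-derivative reduces to the `z₁`-derivative through the symmetry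
`Φ(τ, -z₂, -z₁, t) = -Φ(τ, z₁, z₂, t)`. In the difference of the two term-wise derivatives the
contributions `j m e(± j m (z₁ + z₂)) qᵐʲ² / (1 - …)` cancel, and what remains is the summand of
`Φ^{A₁|₁[m]}`.
-/

lemma not_inLattice_neg {τ z : ℂ} (h : ¬ InLattice τ z) : ¬ InLattice τ (-z) := by
  rintro ⟨a, b, hab⟩
  exact h ⟨-a, -b, by push_cast; linear_combination -hab⟩

lemma exp_mul_exp_ne_one {τ z : ℂ} (h : ¬ InLattice τ z) (j : ℤ) :
    exp (2 * π * I * z) * exp (2 * π * I * τ * j) ≠ 1 := by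
  rw [← exp_add]
  intro hz
  obtain ⟨n, hn⟩ := exp_eq_one_iff.mp hz
  exact h ⟨n, -j, mul_left_cancel₀ two_pi_I_ne_zero (by push_cast; linear_combination hn)⟩

def periodPair {τ : ℂ} (hτ : τ.im ≠ 0) : PeriodPair where
  ω₁ := 1
  ω₂ := τ
  indep := LinearIndependent.pair_iff.2 fun s t hst => by
    have ht : t = 0 := by simpa [hτ] using congrArg im hst
    subst ht
    simpa using hst

lemma isOpen_setOf_not_inLattice {τ : ℂ} (hτ : τ.im ≠ 0) : IsOpen {z | ¬ InLattice τ z} := by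
  have : {z | InLattice τ z} = ((periodPair hτ).lattice : Set ℂ) := by
    ext z
    simp [PeriodPair.mem_lattice, periodPair, InLattice, eq_comm]
  change IsOpen {z | InLattice τ z}ᶜ
  exact this ▸ (periodPair hτ).isClosed_lattice.isOpen_compl

lemma norm_exp_two_pi_I_mul (ζ : ℂ) : ‖exp (2 * π * I * ζ)‖ = Real.exp (-(2 * Real.pi * ζ.im)) := by
  rw [norm_exp]
  congr 1
  simp

lemma half_le_norm_one_sub_exp {ζ : ℂ} (hζ : 1 ≤ |ζ.im|) : 1 / 2 ≤ ‖1 - exp (2 * π * I * ζ)‖ := by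
  have hlt : Real.exp (-1) < 1 / 2 := by
    rw [Real.exp_neg, inv_lt_comm₀ (Real.exp_pos 1) (by norm_num)]
    linarith [Real.add_one_lt_exp one_ne_zero]
  have hgt : 2 < Real.exp 1 := by linarith [Real.add_one_lt_exp one_ne_zero]
  rcases le_abs'.mp hζ with h | h
  · have : 2 ≤ Real.exp (-(2 * Real.pi * ζ.im)) :=
      hgt.le.trans (Real.exp_le_exp.mpr (by nlinarith [Real.pi_gt_three]))
    calc (1 : ℝ) / 2 ≤ ‖exp (2 * π * I * ζ)‖ - ‖(1 : ℂ)‖ := by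
          rw [norm_exp_two_pi_I_mul, norm_one]; linarith
      _ ≤ ‖1 - exp (2 * π * I * ζ)‖ := by rw [norm_sub_rev]; exact norm_sub_norm_le _ _
  · have : Real.exp (-(2 * Real.pi * ζ.im)) ≤ Real.exp (-1) :=
      Real.exp_le_exp.mpr (by nlinarith [Real.pi_gt_three])
    calc (1 : ℝ) / 2 ≤ ‖(1 : ℂ)‖ - ‖exp (2 * π * I * ζ)‖ := by
          rw [norm_exp_two_pi_I_mul, norm_one]; linarith
      _ ≤ ‖1 - exp (2 * π * I * ζ)‖ := norm_sub_norm_le _ _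

lemma exists_bound_norm_inv_one_sub_exp {τ : ℂ} (hτ : 0 < τ.im) {K : Set ℂ} (hK : IsCompact K)
    (hKL : ∀ w ∈ K, ¬ InLattice τ w) :
    ∃ C, ∀ j : ℤ, ∀ w ∈ K, ‖(1 - exp (2 * π * I * w) * exp (2 * π * I * τ * j))⁻¹‖ ≤ C := by
  have hsplit (j : ℤ) (w : ℂ) :
      exp (2 * π * I * w) * exp (2 * π * I * τ * j) = exp (2 * π * I * (w + j * τ)) := by
    rw [← exp_add]; ring_nf
  have hcast : Continuous fun p : ℤ × ℂ => (p.1 : ℂ) :=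
    (continuous_of_discreteTopology (f := ((↑) : ℤ → ℂ))).comp continuous_fst
  obtain ⟨R, hR⟩ := hK.isBounded.exists_norm_le
  obtain ⟨J, hJ⟩ := exists_nat_gt ((R + 1) / τ.im)
  rw [div_lt_iff₀ hτ] at hJ
  obtain ⟨C, hC⟩ := ((Set.finite_Icc (-(J : ℤ)) J).isCompact.prod hK).exists_bound_of_continuousOn
    (f := fun p : ℤ × ℂ => (1 - exp (2 * π * I * p.2) * exp (2 * π * I * τ * p.1))⁻¹)
    (ContinuousOn.inv₀ (Continuous.continuousOn (by fun_prop)) fun p hp =>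
      sub_ne_zero.2 (exp_mul_exp_ne_one (hKL p.2 hp.2) p.1).symm)
  refine ⟨max C 2, fun j w hw => ?_⟩
  by_cases hj : |j| ≤ J
  · exact (hC (j, w) ⟨abs_le.mp hj, hw⟩).trans (le_max_left _ _)
  · have him : 1 ≤ |(w + j * τ).im| := by
      have hwim : |w.im| ≤ R := (abs_im_le_norm w).trans (hR w hw)
      have hjτ : (J + 1) * τ.im ≤ |(j : ℝ)| * τ.im := by
        gcongr
        exact_mod_cast (not_le.mp hj)
      simp only [add_im, mul_im, intCast_re, intCast_im, zero_mul, add_zero]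
      have := abs_sub_abs_le_abs_add ((j : ℝ) * τ.im) w.im
      rw [abs_mul, abs_of_pos hτ] at this
      rw [add_comm]
      linarith
    rw [norm_inv, hsplit]
    refine (inv_le_of_inv_le₀ (by norm_num) ?_).trans (le_max_right _ _)
    simpa using half_le_norm_one_sub_exp him

noncomputable def phiTerm (M τ z₁ z₂ : ℂ) (j : ℤ) : ℂ :=
  exp (2 * π * I * (j : ℂ) * M * (z₁ + z₂)) * exp (2 * π * I * τ * (M * (j : ℂ) ^ 2)) /
      (1 - exp (2 * π * I * z₁) * exp (2 * π * I * τ * (j : ℂ))) -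
    exp (-(2 * π * I * (j : ℂ) * M * (z₁ + z₂))) * exp (2 * π * I * τ * (M * (j : ℂ) ^ 2)) /
      (1 - exp (-(2 * π * I * z₂)) * exp (2 * π * I * τ * (j : ℂ)))

noncomputable def dphiTerm (M τ z₁ z₂ : ℂ) (j : ℤ) : ℂ :=
  2 * π * I *
    ((j : ℂ) * M *
        (exp (2 * π * I * (j : ℂ) * M * (z₁ + z₂)) * exp (2 * π * I * τ * (M * (j : ℂ) ^ 2)) /
            (1 - exp (2 * π * I * z₁) * exp (2 * π * I * τ * (j : ℂ))) +
          exp (-(2 * π * I * (j : ℂ) * M * (z₁ + z₂))) *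
              exp (2 * π * I * τ * (M * (j : ℂ) ^ 2)) /
            (1 - exp (-(2 * π * I * z₂)) * exp (2 * π * I * τ * (j : ℂ)))) +
      exp (2 * π * I * (j : ℂ) * M * (z₁ + z₂)) * exp (2 * π * I * τ * (M * (j : ℂ) ^ 2)) *
          (exp (2 * π * I * z₁) * exp (2 * π * I * τ * (j : ℂ))) /
        (1 - exp (2 * π * I * z₁) * exp (2 * π * I * τ * (j : ℂ))) ^ 2)

noncomputable def phiATerm (M τ z₁ z₂ : ℂ) (j : ℤ) : ℂ :=
  exp (2 * π * I * (j : ℂ) * M * (z₁ + z₂)) * exp (2 * π * I * z₁) *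
        exp (2 * π * I * τ * (M * (j : ℂ) ^ 2 + (j : ℂ))) /
      (1 - exp (2 * π * I * z₁) * exp (2 * π * I * τ * (j : ℂ))) ^ 2 -
    exp (-(2 * π * I * (j : ℂ) * M * (z₁ + z₂))) * exp (-(2 * π * I * z₂)) *
        exp (2 * π * I * τ * (M * (j : ℂ) ^ 2 + (j : ℂ))) /
      (1 - exp (-(2 * π * I * z₂)) * exp (2 * π * I * τ * (j : ℂ))) ^ 2

lemma Phi_eq_tsum_phiTerm (n : ℕ) (τ z₁ z₂ t : ℂ) :
    Phi n τ z₁ z₂ t = exp (2 * π * I * ((n : ℂ) + 1) * t) * ∑' j, phiTerm (n + 1) τ z₁ z₂ j :=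
  rfl

lemma PhiA_eq_tsum_phiATerm (m : ℕ) (τ z₁ z₂ t : ℂ) :
    PhiA m τ z₁ z₂ t = exp (2 * π * I * (m : ℂ) * t) * ∑' j, phiATerm m τ z₁ z₂ j :=
  rfl

lemma hasDerivAt_phiTerm (M τ z₂ : ℂ) (j : ℤ) {z₁ : ℂ}
    (hz₁ : 1 - exp (2 * π * I * z₁) * exp (2 * π * I * τ * (j : ℂ)) ≠ 0) :
    HasDerivAt (fun w => phiTerm M τ w z₂ j) (dphiTerm M τ z₁ z₂ j) z₁ := by
  have hlin : HasDerivAt (fun w => 2 * π * I * (j : ℂ) * M * (w + z₂)) (2 * π * I * (j : ℂ) * M)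
      z₁ := by
    simpa using ((hasDerivAt_id z₁).add_const z₂).const_mul (2 * π * I * (j : ℂ) * M)
  have hden : HasDerivAt (fun w => 1 - exp (2 * π * I * w) * exp (2 * π * I * τ * (j : ℂ)))
      (-(2 * π * I * (exp (2 * π * I * z₁) * exp (2 * π * I * τ * (j : ℂ))))) z₁ := by
    refine ((((hasDerivAt_id z₁).const_mul (2 * π * I)).cexp.mul_const _).const_sub 1).congr_deriv
      ?_
    simp only [mul_one, id]
    ring
  refine (((hlin.cexp.mul_const _).div hden hz₁).sub
    ((hlin.neg.cexp.mul_const _).div_const (1 - exp (-(2 * π * I * z₂)) *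
      exp (2 * π * I * τ * (j : ℂ))))).congr_deriv ?_
  simp only [dphiTerm, Pi.neg_apply]
  generalize exp (2 * π * I * z₁) * exp (2 * π * I * τ * (j : ℂ)) = E at hz₁ ⊢
  field_simp
  ring

lemma phiTerm_neg_swap (M τ z₁ z₂ : ℂ) (j : ℤ) :
    phiTerm M τ (-z₂) (-z₁) j = -phiTerm M τ z₁ z₂ j := by
  simp only [phiTerm, ← neg_add_rev, mul_neg, neg_neg]
  ring

lemma phiATerm_eq_sub_dphiTerm (M τ z₁ z₂ : ℂ) (j : ℤ) :
    phiATerm M τ z₁ z₂ j = (dphiTerm M τ z₁ z₂ j - dphiTerm M τ (-z₂) (-z₁) j) / (2 * π * I) := by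
  have hsplit : exp (2 * π * I * τ * (M * (j : ℂ) ^ 2 + j)) =
      exp (2 * π * I * τ * (M * (j : ℂ) ^ 2)) * exp (2 * π * I * τ * j) := by
    rw [← exp_add]; ring_nf
  simp only [phiATerm, dphiTerm, hsplit, ← neg_add_rev, mul_neg, neg_neg]
  field_simp
  ring

lemma norm_phiTerm_le {M τ z₁ z₂ : ℂ} {j : ℤ} {S T C : ℝ} (hT : 0 < T)
    (hTM : T ≤ (2 * M * τ).im) (hS : |(M * (z₁ + z₂)).im| ≤ S)
    (hC₁ : ‖(1 - exp (2 * π * I * z₁) * exp (2 * π * I * τ * (j : ℂ)))⁻¹‖ ≤ C)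
    (hC₂ : ‖(1 - exp (-(2 * π * I * z₂)) * exp (2 * π * I * τ * (j : ℂ)))⁻¹‖ ≤ C) :
    ‖phiTerm M τ z₁ z₂ j‖ ≤
      2 * C * Real.exp (-Real.pi * (T * j ^ 2 - 2 * S * ((|j| : ℤ) : ℝ))) := by
  have hX : ‖exp (2 * π * I * j * M * (z₁ + z₂)) * exp (2 * π * I * τ * (M * (j : ℂ) ^ 2))‖ ≤
      Real.exp (-Real.pi * (T * j ^ 2 - 2 * S * ((|j| : ℤ) : ℝ))) := by
    convert norm_jacobiTheta₂_term_le hT hS hTM j using 2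
    rw [jacobiTheta₂_term, ← exp_add]; ring_nf
  have hY : ‖exp (-(2 * π * I * j * M * (z₁ + z₂))) * exp (2 * π * I * τ * (M * (j : ℂ) ^ 2))‖ ≤
      Real.exp (-Real.pi * (T * j ^ 2 - 2 * S * ((|j| : ℤ) : ℝ))) := by
    convert norm_jacobiTheta₂_term_le hT (S := S) (z := -(M * (z₁ + z₂)))
      (by rwa [neg_im, abs_neg]) hTM j using 2
    rw [jacobiTheta₂_term, ← exp_add]; ring_nf
  simp only [phiTerm, div_eq_mul_inv]
  refine (norm_sub_le _ _).trans ?_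
  refine (add_le_add (norm_mul_le_of_le hX hC₁) (norm_mul_le_of_le hY hC₂)).trans_eq ?_
  ring

lemma hasSum_dphiTerm (n : ℕ) {τ z₁ z₂ : ℂ} (hτ : 0 < τ.im) (h₁ : ¬ InLattice τ z₁)
    (h₂ : ¬ InLattice τ (-z₂)) :
    HasSum (fun j => dphiTerm (n + 1) τ z₁ z₂ j)
      (deriv (fun w => ∑' j, phiTerm (n + 1) τ w z₂ j) z₁) := by
  have hden {w : ℂ} (hw : ¬ InLattice τ w) (j : ℤ) :
      1 - exp (2 * π * I * w) * exp (2 * π * I * τ * j) ≠ 0 :=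
    sub_ne_zero.2 (exp_mul_exp_ne_one hw j).symm
  obtain ⟨ε, hε, hball⟩ : ∃ ε > 0, Metric.closedBall z₁ ε ⊆ {z | ¬ InLattice τ z} :=
    Metric.nhds_basis_closedBall.mem_iff.1 ((isOpen_setOf_not_inLattice hτ.ne').mem_nhds h₁)
  obtain ⟨C, hC⟩ := exists_bound_norm_inv_one_sub_exp hτ
    ((isCompact_closedBall z₁ ε).insert (-z₂)) (by rintro w (rfl | hw); exacts [h₂, hball hw])
  obtain ⟨S, hS⟩ := (isCompact_closedBall z₁ ε).exists_bound_of_continuousOn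
    (f := fun w => ((n : ℂ) + 1) * (w + z₂)) (by fun_prop)
  have hT : (0 : ℝ) < 2 * (n + 1) * τ.im := by positivity
  have hderiv (j : ℤ) :
      deriv (fun w => phiTerm (n + 1) τ w z₂ j) z₁ = dphiTerm (n + 1) τ z₁ z₂ j :=
    (hasDerivAt_phiTerm _ _ _ j (hden h₁ j)).deriv
  simp only [← hderiv]
  refine hasSum_deriv_of_summable_norm
    ((summable_pow_mul_jacobiTheta₂_term_bound S hT 0).mul_left (2 * C))
    (fun j w hw => (hasDerivAt_phiTerm _ _ _ j
      (hden (hball (Metric.ball_subset_closedBall hw)) j)).differentiableAt.differentiableWithinAt)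
    Metric.isOpen_ball (fun j w hw => ?_) (Metric.mem_ball_self hε)
  have hw := Metric.ball_subset_closedBall hw
  have hC₂ := hC j (-z₂) (Set.mem_insert _ _)
  rw [mul_neg] at hC₂
  simpa using norm_phiTerm_le hT (by simp) ((abs_im_le_norm _).trans (hS w hw))
    (hC j w (Set.mem_insert_of_mem _ hw)) hC₂

lemma deriv_Phi_fst (n : ℕ) (τ z₁ z₂ t : ℂ) :
    deriv (fun w => Phi n τ w z₂ t) z₁ =
      exp (2 * π * I * ((n : ℂ) + 1) * t) * deriv (fun w => ∑' j, phiTerm (n + 1) τ w z₂ j) z₁ :=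
  deriv_const_mul_field _

lemma Phi_neg_swap (n : ℕ) (τ z₁ z₂ t : ℂ) : Phi n τ (-z₂) (-z₁) t = -Phi n τ z₁ z₂ t := by
  simp only [Phi_eq_tsum_phiTerm, phiTerm_neg_swap, tsum_neg, mul_neg]

lemma deriv_Phi_snd (n : ℕ) (τ z₁ z₂ t : ℂ) :
    deriv (fun w => Phi n τ z₁ w t) z₂ = deriv (fun w => Phi n τ w (-z₁) t) (-z₂) := by
  have h : (fun w => Phi n τ z₁ w t) = fun w => -Phi n τ (-w) (-z₁) t := by
    ext w
    rw [Phi_neg_swap, neg_neg]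
  rw [h, deriv.fun_neg, deriv_comp_neg (f := fun w => Phi n τ w (-z₁) t), neg_neg]

/-- Lemma 8.1 of Kac–Wakimoto: `Φ^{A₁|₁[m]} = D₀ Φ^{[m-1]}`. -/
theorem statement15 (m : ℕ) (hm : 1 ≤ m) (τ z₁ z₂ t : ℂ) (hτ : 0 < τ.im)
    (h₁ : ¬ InLattice τ z₁) (h₂ : ¬ InLattice τ z₂) :
    PhiA m τ z₁ z₂ t =
      (1 / (2 * π * I)) *
        (deriv (fun w => Phi (m - 1) τ w z₂ t) z₁ - deriv (fun w => Phi (m - 1) τ z₁ w t) z₂) := by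
  obtain ⟨n, rfl⟩ : ∃ n, m = n + 1 := ⟨m - 1, by omega⟩
  have h₂' := not_inLattice_neg h₂
  have hs₁ := hasSum_dphiTerm n hτ h₁ h₂'
  have hs₂ := hasSum_dphiTerm n (z₂ := -z₁) hτ h₂' (by rwa [neg_neg])
  rw [Nat.add_sub_cancel, deriv_Phi_snd, deriv_Phi_fst, deriv_Phi_fst, ← hs₁.tsum_eq,
    ← hs₂.tsum_eq, PhiA_eq_tsum_phiATerm, Nat.cast_succ]
  simp only [phiATerm_eq_sub_dphiTerm, tsum_div_const, hs₁.summable.tsum_sub hs₂.summable]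
  ring

end KW
end
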